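/- Let h, k ≥ 1 be natural numbers. The one-relator presented group ⟨x, y | x^{1−hk}(y x^{h})^k⟩ (where x^{1−hk} is an integer power) is isomorphic to the torus knot group ⟨s, t | s^k t^{−(hk−1)}⟩ (i.e. the group with presentation ⟨s, t | s^k = t^{hk−1}⟩). -/

import Mathlib

/-!
With `s = y x^h` and `t = x` the relator `x^{1-hk} (y x^h)^k` reads `t^{1-hk} s^k`, a cyclic
conjugate of `s^k t^{-(hk-1)}`. Formally: the automorphism of `F₂` given by `x ↦ y`,
`y ↦ x y^{-h}` (a transvection followed by swapping the generators) sends `y x^h ↦ x`, hence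
the first relator to `y^{1-hk} x^k`, whose normal closure is that of the second relator.
-/

namespace Stmt10

def x : FreeGroup (Fin 2) := FreeGroup.of 0
def y : FreeGroup (Fin 2) := FreeGroup.of 1

end Stmt10

theorem Subgroup.normalClosure_singleton_mul_comm {G : Type*} [Group G] (a b : G) :
    Subgroup.normalClosure {a * b} = Subgroup.normalClosure {b * a} := by
  -- `a * b = b⁻¹ * (b * a) * b`
  have hle : ∀ a b : G, Subgroup.normalClosure {a * b} ≤ Subgroup.normalClosure {b * a} :=
    fun a b => Subgroup.normalClosure_le_normal <| Set.singleton_subset_iff.mpr <| by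
      simpa [mul_assoc] using Subgroup.normalClosure_normal.conj_mem (b * a)
        (Subgroup.subset_normalClosure (Set.mem_singleton _)) b⁻¹
  exact le_antisymm (hle a b) (hle b a)

def PresentedGroup.congr {α β : Type*} {rels : Set (FreeGroup α)} {rels' : Set (FreeGroup β)}
    (e : FreeGroup α ≃* FreeGroup β)
    (he : Subgroup.normalClosure (e '' rels) = Subgroup.normalClosure rels') :
    PresentedGroup rels ≃* PresentedGroup rels' :=
  QuotientGroup.congr _ _ e <| by
    rw [← he]
    exact Subgroup.map_normalClosure rels (e : FreeGroup α →* FreeGroup β) e.surjective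

namespace FreeGroup

variable {α : Type*} [DecidableEq α]

def transvectionHom (i j : α) (n : ℤ) : FreeGroup α →* FreeGroup α :=
  lift (Function.update of i (of i * of j ^ n))

@[simp]
theorem transvectionHom_of_self (i j : α) (n : ℤ) :
    transvectionHom i j n (of i) = of i * of j ^ n := by
  simp [transvectionHom]

@[simp]
theorem transvectionHom_of_ne {i l : α} (j : α) (n : ℤ) (hl : l ≠ i) :
    transvectionHom i j n (of l) = of l := by
  simp [transvectionHom, hl]

theorem transvectionHom_comp_neg {i j : α} (hij : i ≠ j) (n : ℤ) :
    (transvectionHom i j n).comp (transvectionHom i j (-n)) = MonoidHom.id _ := by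
  ext l
  by_cases hl : l = i
  · subst hl
    simp [transvectionHom_of_ne _ _ hij.symm]
  · simp [hl]

def transvection {i j : α} (hij : i ≠ j) (n : ℤ) : FreeGroup α ≃* FreeGroup α :=
  MonoidHom.toMulEquiv (transvectionHom i j n) (transvectionHom i j (-n))
    (by simpa using transvectionHom_comp_neg hij (-n)) (transvectionHom_comp_neg hij n)

@[simp]
theorem transvection_apply {i j : α} (hij : i ≠ j) (n : ℤ) (w : FreeGroup α) :
    transvection hij n w = transvectionHom i j n w := rfl

end FreeGroup

namespace Stmt10

/-- The one-relator group `⟨x, y | x^{1−hk}(y x^{h})^k⟩` (integer power) is isomorphic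
to the torus knot group `⟨s, t | s^k t^{−(hk−1)}⟩`, i.e. `⟨s, t | s^k = t^{hk−1}⟩`. -/
theorem stmt10 (h k : ℕ) (hh : 1 ≤ h) (hk : 1 ≤ k) :
    Nonempty
      (PresentedGroup
          ({x ^ ((1 : ℤ) - h * k) * (y * x ^ h) ^ k} : Set (FreeGroup (Fin 2))) ≃*
        PresentedGroup ({x ^ k * (y ^ (h * k - 1))⁻¹} : Set (FreeGroup (Fin 2)))) := by
  let e := (FreeGroup.transvection (i := (1 : Fin 2)) (j := 0) one_ne_zero (-h)).trans
    (FreeGroup.freeGroupCongr (Equiv.swap 0 1))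
  have he : e (x ^ ((1 : ℤ) - h * k) * (y * x ^ h) ^ k) = y ^ ((1 : ℤ) - h * k) * x ^ k := by
    simp [e, x, y]
  have hy : y ^ ((1 : ℤ) - h * k) = (y ^ (h * k - 1))⁻¹ := by
    rw [← zpow_natCast, ← zpow_neg, Nat.cast_sub (Nat.mul_pos hh hk)]
    push_cast
    ring_nf
  refine ⟨PresentedGroup.congr e ?_⟩
  rw [Set.image_singleton, he, hy, Subgroup.normalClosure_singleton_mul_comm]

end Stmt10
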